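/- Let 1 < p, q < ∞ and let X = f_{p,q} over dyadic rectangles, with S_q x (u) = (Σ_I |x_I 𝟙_{I,p}(u)|^q)^{1/q}. For nonzero x ∈ X, the functional F_x(y) := ‖x‖^{1−p} ∫ (S_q x)^{p−q} (Σ_I |x_I|^{q−2} \overline{x_I} y_I |𝟙_{I,p}|^q) du satisfies ‖F_x‖ = 1 and F_x(x) = ‖x‖, i.e. F_x is a norming functional; in particular |F_x(e_I)| = (|x_I|^{q−1}/‖x‖^{p−1})·|I|^{−q/p} ∫_I (S_q x)^{p−q}. -/

import Mathlib

open MeasureTheory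

/-- A dyadic rectangle `I = I₁ × … × I_d ⊆ [0,1]^d`, where
`I_i = 2^{-j_i}(k_i + [0,1))` with `k_i < 2^{j_i}`. -/
structure DyadicRect (d : ℕ) where
  j : Fin d → ℕ
  k : Fin d → ℕ
  hk : ∀ i, k i < 2 ^ j i

namespace DyadicRect

/-- The rectangle as a subset of `ℝ^d`. -/
def toSet {d : ℕ} (I : DyadicRect d) : Set (Fin d → ℝ) :=
  {u | ∀ i, (I.k i : ℝ) / 2 ^ I.j i ≤ u i ∧ u i < ((I.k i : ℝ) + 1) / 2 ^ I.j i}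

/-- The volume `|I| = ∏ 2^{-j_i}`. -/
noncomputable def vol {d : ℕ} (I : DyadicRect d) : ℝ := ∏ i, ((2 : ℝ) ^ I.j i)⁻¹

/-- The `L^p`-normalized indicator `𝟙_{I,p} = |I|^{-1/p} 𝟙_I`. -/
noncomputable def indp {d : ℕ} (p : ℝ) (I : DyadicRect d) (u : Fin d → ℝ) : ℝ :=
  I.vol ^ (-(1 / p)) * I.toSet.indicator (fun _ => (1 : ℝ)) u

end DyadicRect

/-- The square-type function `S_q x (u) = (Σ_I |x_I 𝟙_{I,p}(u)|^q)^{1/q}`. -/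
noncomputable def Sq {d : ℕ} {𝕜 : Type*} [RCLike 𝕜] (p q : ℝ)
    (x : DyadicRect d → 𝕜) (u : Fin d → ℝ) : ℝ :=
  (∑' I, (‖x I‖ * DyadicRect.indp p I u) ^ q) ^ (1 / q)

/-- The `f_{p,q}` norm `‖x‖ = ‖S_q x‖_{L^p}`. -/
noncomputable def fpqNorm {d : ℕ} {𝕜 : Type*} [RCLike 𝕜] (p q : ℝ)
    (x : DyadicRect d → 𝕜) : ℝ :=
  (∫ u, Sq p q x u ^ p) ^ (1 / p)

open scoped ComplexConjugate

/-- The candidate norming functional of a nonzero `x ∈ f_{p,q}`. -/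
noncomputable def fpqF {d : ℕ} {𝕜 : Type*} [RCLike 𝕜] (p q : ℝ)
    (x y : DyadicRect d → 𝕜) : 𝕜 :=
  ((fpqNorm p q x ^ (1 - p) : ℝ) : 𝕜) *
    ∫ u, ((Sq p q x u ^ (p - q) : ℝ) : 𝕜) *
      ∑' I, ((‖x I‖ ^ (q - 2) * DyadicRect.indp p I u ^ q : ℝ) : 𝕜) *
        conj (x I) * y I

section Aux

open DyadicRect Set

variable {d : ℕ} {𝕜 : Type*} [RCLike 𝕜] {p q : ℝ}

instance : Countable (DyadicRect d) := by
  have h : Function.Injective (fun I : DyadicRect d => (I.j, I.k)) := by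
    rintro ⟨j, k, hk⟩ ⟨j', k', hk'⟩ h
    simp only [Prod.mk.injEq] at h
    cases h.1; cases h.2; rfl
  exact h.countable

lemma aux_toSet_eq (I : DyadicRect d) :
    I.toSet = Set.univ.pi fun i => Set.Ico ((I.k i : ℝ)/2^I.j i) (((I.k i : ℝ)+1)/2^I.j i) := by
  ext u; simp [DyadicRect.toSet, Set.mem_pi, Set.mem_Ico]

lemma aux_measurableSet_toSet (I : DyadicRect d) : MeasurableSet I.toSet := by
  rw [aux_toSet_eq]; exact MeasurableSet.univ_pi fun i => measurableSet_Ico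

lemma aux_vol_pos (I : DyadicRect d) : 0 < I.vol :=
  Finset.prod_pos fun i _ => by positivity

lemma aux_volume_toSet (I : DyadicRect d) : volume I.toSet = ENNReal.ofReal I.vol := by
  rw [aux_toSet_eq, volume_pi_pi, DyadicRect.vol,
    ENNReal.ofReal_prod_of_nonneg (fun i _ => by positivity)]
  refine Finset.prod_congr rfl fun i _ => ?_
  rw [Real.volume_Ico]
  congr 1
  field_simp
  ring

lemma aux_indp_nonneg (I : DyadicRect d) (u : Fin d → ℝ) : 0 ≤ indp p I u :=
  mul_nonneg (Real.rpow_nonneg (aux_vol_pos I).le _)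
    (Set.indicator_nonneg (fun _ _ => zero_le_one) u)

lemma aux_measurable_indp (I : DyadicRect d) : Measurable (indp p I) :=
  measurable_const.mul
    ((measurable_const (a := (1:ℝ))).indicator (aux_measurableSet_toSet I))

lemma aux_rpow_mul_self {t a : ℝ} (ht : 0 ≤ t) (ha : a + 1 ≠ 0) :
    t ^ a * t = t ^ (a + 1) := by
  rcases eq_or_lt_of_le ht with h | h
  · rw [← h, mul_zero, Real.zero_rpow ha]
  · rw [Real.rpow_add_one h.ne' a]

lemma aux_tsum_zero {α : Type*} {f : α → ℝ} (hf : Summable f) (hnn : ∀ i, 0 ≤ f i)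
    (h : ∑' i, f i = 0) (i : α) : f i = 0 :=
  le_antisymm (h ▸ Summable.le_tsum hf i fun j _ => hnn j) (hnn i)

lemma aux_term_nonneg (x : DyadicRect d → 𝕜) (u : Fin d → ℝ) (I : DyadicRect d) :
    0 ≤ (‖x I‖ * indp p I u) ^ q :=
  Real.rpow_nonneg (mul_nonneg (norm_nonneg _) (aux_indp_nonneg I u)) q

lemma aux_Sq_nonneg (x : DyadicRect d → 𝕜) (u : Fin d → ℝ) : 0 ≤ Sq p q x u :=
  Real.rpow_nonneg (tsum_nonneg (aux_term_nonneg x u)) _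

lemma aux_Sq_rpow (hq0 : q ≠ 0) (x : DyadicRect d → 𝕜) (u : Fin d → ℝ) :
    Sq p q x u ^ q = ∑' I, (‖x I‖ * indp p I u) ^ q := by
  rw [Sq, ← Real.rpow_mul (tsum_nonneg (aux_term_nonneg x u)), one_div,
    inv_mul_cancel₀ hq0, Real.rpow_one]

lemma aux_measurable_Sq (x : DyadicRect d → 𝕜)
    (hx1 : ∀ u, Summable fun I => (‖x I‖ * indp p I u) ^ q) :
    Measurable (Sq p q x) := by
  have h : Measurable fun u => ∑' I, (‖x I‖ * indp p I u) ^ q := by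
    have heq : (fun u => ∑' I, (‖x I‖ * indp p I u) ^ q)
        = fun u => (∑' I, ENNReal.ofReal ((‖x I‖ * indp p I u) ^ q)).toReal := by
      funext u
      rw [← ENNReal.ofReal_tsum_of_nonneg (aux_term_nonneg x u) (hx1 u),
        ENNReal.toReal_ofReal (tsum_nonneg (aux_term_nonneg x u))]
    rw [heq]
    refine (Measurable.ennreal_tsum fun I => Measurable.ennreal_ofReal ?_).ennreal_toReal
    exact (measurable_const.mul (aux_measurable_indp I)).pow measurable_const
  exact h.pow measurable_const

lemma aux_le_Sq (hq1 : 1 < q) (x : DyadicRect d → 𝕜)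
    (hx1 : ∀ u, Summable fun I => (‖x I‖ * indp p I u) ^ q)
    (u : Fin d → ℝ) (I : DyadicRect d) :
    ‖x I‖ * indp p I u ≤ Sq p q x u := by
  have hq0 : q ≠ 0 := by linarith
  have ha : 0 ≤ ‖x I‖ * indp p I u := mul_nonneg (norm_nonneg _) (aux_indp_nonneg I u)
  have h1 : (‖x I‖ * indp p I u) ^ q ≤ ∑' J, (‖x J‖ * indp p J u) ^ q :=
    Summable.le_tsum (hx1 u) I fun j _ => aux_term_nonneg x u j
  have h2 := Real.rpow_le_rpow (aux_term_nonneg x u I) h1 (by positivity : (0:ℝ) ≤ 1/q)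
  calc ‖x I‖ * indp p I u = ((‖x I‖ * indp p I u) ^ q) ^ (1/q) := by
        rw [← Real.rpow_mul ha, mul_one_div, div_self hq0, Real.rpow_one]
    _ ≤ Sq p q x u := h2

/-- Key identity for F_x(x). -/
lemma aux_key_eq (hp0 : p ≠ 0) (hq1 : 1 < q) (x : DyadicRect d → 𝕜)
    (hx1 : ∀ u, Summable fun I => (‖x I‖ * indp p I u) ^ q) (u : Fin d → ℝ) :
    ((Sq p q x u ^ (p - q) : ℝ) : 𝕜) *
      ∑' I, ((‖x I‖ ^ (q - 2) * indp p I u ^ q : ℝ) : 𝕜) * conj (x I) * x I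
    = ((Sq p q x u ^ p : ℝ) : 𝕜) := by
  have hq0 : q ≠ 0 := by linarith
  have step1 : ∀ I, ((‖x I‖ ^ (q - 2) * indp p I u ^ q : ℝ) : 𝕜) * conj (x I) * x I
      = (((‖x I‖ * indp p I u) ^ q : ℝ) : 𝕜) := by
    intro I
    rw [mul_assoc, RCLike.conj_mul]
    rw [show ((‖x I‖ : 𝕜)) ^ 2 = ((‖x I‖ ^ (2:ℕ) : ℝ) : 𝕜) by push_cast; ring]
    rw [← RCLike.ofReal_mul]
    congr 1
    rw [Real.mul_rpow (norm_nonneg _) (aux_indp_nonneg I u)]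
    have h2 : ‖x I‖ ^ (q - 2) * ‖x I‖ ^ (2:ℕ) = ‖x I‖ ^ q := by
      rw [← Real.rpow_natCast (‖x I‖) 2]
      rcases eq_or_lt_of_le (norm_nonneg (x I)) with h | h
      · rw [← h, Real.zero_rpow (by norm_num : ((2:ℕ):ℝ) ≠ 0), mul_zero,
          Real.zero_rpow hq0]
      · rw [← Real.rpow_add h]; norm_num
    calc ‖x I‖ ^ (q-2) * indp p I u ^ q * ‖x I‖ ^ (2:ℕ)
        = ‖x I‖ ^ (q-2) * ‖x I‖ ^ (2:ℕ) * indp p I u ^ q := by ring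
      _ = ‖x I‖ ^ q * indp p I u ^ q := by rw [h2]
  rw [tsum_congr step1, ← RCLike.ofReal_tsum, ← RCLike.ofReal_mul]
  congr 1
  rw [← aux_Sq_rpow hq0]
  rcases eq_or_lt_of_le (aux_Sq_nonneg x u) with h | h
  · rw [← h, Real.zero_rpow hq0, mul_zero, Real.zero_rpow hp0]
  · rw [← Real.rpow_add h]; ring_nf

/-- Key pointwise bound via Hölder in ℓ^q. -/
lemma aux_key_bound (hq1 : 1 < q) (x y : DyadicRect d → 𝕜)
    (hx1 : ∀ u, Summable fun I => (‖x I‖ * indp p I u) ^ q)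
    (hy1 : ∀ u, Summable fun I => (‖y I‖ * indp p I u) ^ q) (u : Fin d → ℝ) :
    ‖((Sq p q x u ^ (p - q) : ℝ) : 𝕜) *
      ∑' I, ((‖x I‖ ^ (q - 2) * indp p I u ^ q : ℝ) : 𝕜) * conj (x I) * y I‖
    ≤ Sq p q x u ^ (p - 1) * Sq p q y u := by
  have hq0 : q ≠ 0 := by linarith
  have hq1' : q - 1 ≠ 0 := by intro h; exact absurd (by linarith : q = 1) (by linarith)
  set A := Sq p q x u with hAdef
  set B := Sq p q y u with hBdef
  have hA : 0 ≤ A := aux_Sq_nonneg x u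
  have hB : 0 ≤ B := aux_Sq_nonneg y u
  rcases eq_or_lt_of_le hA with hA0 | hApos
  · -- A = 0 : every term vanishes
    have hz : ∀ I, ((‖x I‖ ^ (q - 2) * indp p I u ^ q : ℝ) : 𝕜) * conj (x I) * y I = 0 := by
      intro I
      have hSig : ∑' J, (‖x J‖ * indp p J u) ^ q = 0 := by
        have := hA0.symm
        rw [hAdef, Sq] at this
        exact (Real.rpow_eq_zero (tsum_nonneg (aux_term_nonneg x u))
          (one_div_ne_zero hq0)).mp this
      have h1 : (‖x I‖ * indp p I u) ^ q = 0 :=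
        aux_tsum_zero (hx1 u) (aux_term_nonneg x u) hSig I
      have h2 : ‖x I‖ * indp p I u = 0 := by
        rwa [Real.rpow_eq_zero (mul_nonneg (norm_nonneg _) (aux_indp_nonneg I u)) hq0] at h1
      rcases mul_eq_zero.mp h2 with h | h
      · simp [norm_eq_zero.mp h]
      · rw [h, Real.zero_rpow hq0]; simp
    rw [tsum_congr hz, tsum_zero, mul_zero, norm_zero]
    exact mul_nonneg (Real.rpow_nonneg hA _) hB
  · -- A > 0
    set a : DyadicRect d → ℝ := fun I => ‖x I‖ * indp p I u with hadef
    set b : DyadicRect d → ℝ := fun I => ‖y I‖ * indp p I u with hbdef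
    have ha : ∀ I, 0 ≤ a I := fun I => mul_nonneg (norm_nonneg _) (aux_indp_nonneg I u)
    have hb : ∀ I, 0 ≤ b I := fun I => mul_nonneg (norm_nonneg _) (aux_indp_nonneg I u)
    set f : DyadicRect d → ℝ := fun I => a I ^ (q - 1) with hfdef
    have hf : ∀ I, 0 ≤ f I := fun I => Real.rpow_nonneg (ha I) _
    have hconj : (q/(q-1)).HolderConjugate q := (Real.HolderConjugate.conjExponent hq1).symm
    have hfq : ∀ I, f I ^ (q/(q-1)) = a I ^ q := by
      intro I
      rw [hfdef, ← Real.rpow_mul (ha I), mul_comm (q-1), div_mul_cancel₀ q hq1']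
    have hsum_f : Summable fun I => f I ^ (q/(q-1)) := by
      rw [summable_congr hfq]; exact hx1 u
    obtain ⟨hsummable, hle⟩ :=
      Real.summable_and_inner_le_Lp_mul_Lq_tsum_of_nonneg hconj hf hb hsum_f (hy1 u)
    have hnorm : ∀ I, ‖((‖x I‖ ^ (q - 2) * indp p I u ^ q : ℝ) : 𝕜) * conj (x I) * y I‖
        = f I * b I := by
      intro I
      rw [norm_mul, norm_mul, RCLike.norm_ofReal, RCLike.norm_conj,
        abs_of_nonneg (mul_nonneg (Real.rpow_nonneg (norm_nonneg _) _)
          (Real.rpow_nonneg (aux_indp_nonneg I u) _))]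
      rw [hfdef, hadef, hbdef]
      simp only []
      rw [Real.mul_rpow (norm_nonneg _) (aux_indp_nonneg I u)]
      have h1 : ‖x I‖ ^ (q - 2) * ‖x I‖ = ‖x I‖ ^ (q - 1) := by
        have := aux_rpow_mul_self (t := ‖x I‖) (a := q - 2) (norm_nonneg _)
          (by intro h; exact hq1' (by linarith))
        rw [this]; congr 1; ring
      have h2 : indp p I u ^ (q - 1) * indp p I u = indp p I u ^ q := by
        have := aux_rpow_mul_self (t := indp p I u) (a := q - 1) (aux_indp_nonneg I u)
          (by intro h; exact hq0 (by linarith))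
        rw [this]; congr 1; ring
      rw [← h1, ← h2]; ring
    have hsn : Summable fun I =>
        ‖((‖x I‖ ^ (q - 2) * indp p I u ^ q : ℝ) : 𝕜) * conj (x I) * y I‖ := by
      rw [summable_congr hnorm]; exact hsummable
    have bound1 : ‖∑' I, ((‖x I‖ ^ (q - 2) * indp p I u ^ q : ℝ) : 𝕜) * conj (x I) * y I‖
        ≤ A ^ (q - 1) * B := by
      refine (norm_tsum_le_tsum_norm hsn).trans ?_
      rw [tsum_congr hnorm]
      refine hle.trans (le_of_eq ?_)
      have e1 : ∑' I, f I ^ (q/(q-1)) = A ^ q := by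
        rw [tsum_congr hfq, ← aux_Sq_rpow hq0]
      have e2 : (∑' I, b I ^ q) ^ (1/q) = B := rfl
      rw [e1, e2]
      congr 1
      rw [one_div_div, ← Real.rpow_mul hA, mul_comm q, div_mul_cancel₀ _ hq0]
    rw [norm_mul, RCLike.norm_ofReal, abs_of_nonneg (Real.rpow_nonneg hA _)]
    calc A ^ (p - q) * ‖∑' I, ((‖x I‖ ^ (q - 2) * indp p I u ^ q : ℝ) : 𝕜) * conj (x I) * y I‖
        ≤ A ^ (p - q) * (A ^ (q - 1) * B) :=
          mul_le_mul_of_nonneg_left bound1 (Real.rpow_nonneg hA _)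
      _ = A ^ (p - 1) * B := by
          rw [← mul_assoc, ← Real.rpow_add hApos]; ring_nf

end Aux

section Main

open DyadicRect Set

variable {d : ℕ} {𝕜 : Type*} [RCLike 𝕜] {p q : ℝ}

lemma aux_integral_Sq_pos (hp : 1 < p) (hq : 1 < q) (x : DyadicRect d → 𝕜) (hx : x ≠ 0)
    (hx1 : ∀ u, Summable fun I => (‖x I‖ * indp p I u) ^ q)
    (hx2 : Integrable fun u => Sq p q x u ^ p) :
    0 < ∫ u, Sq p q x u ^ p := by
  have hp0 : p ≠ 0 := by linarith
  obtain ⟨I₀, hI₀⟩ : ∃ I, x I ≠ 0 := Function.ne_iff.mp hx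
  set c : ℝ := (‖x I₀‖ * I₀.vol ^ (-(1/p))) ^ p with hc
  have hcpos : 0 < c := by
    apply Real.rpow_pos_of_pos
    exact mul_pos (norm_pos_iff.mpr hI₀) (Real.rpow_pos_of_pos (aux_vol_pos I₀) _)
  have hg : ∀ u, (‖x I₀‖ * indp p I₀ u) ^ p = I₀.toSet.indicator (fun _ => c) u := by
    intro u
    by_cases hu : u ∈ I₀.toSet
    · rw [indicator_of_mem hu, indp, indicator_of_mem hu, mul_one]
    · rw [indicator_of_notMem hu, indp, indicator_of_notMem hu, mul_zero, mul_zero,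
        Real.zero_rpow hp0]
  have hgint : Integrable (I₀.toSet.indicator (fun _ => c)) := by
    rw [integrable_indicator_iff (aux_measurableSet_toSet I₀)]
    exact integrableOn_const (by rw [aux_volume_toSet]; exact ENNReal.ofReal_ne_top)
  have hle : (I₀.toSet.indicator (fun _ => c)) ≤ fun u => Sq p q x u ^ p := by
    intro u
    rw [← hg u]
    exact Real.rpow_le_rpow (mul_nonneg (norm_nonneg _) (aux_indp_nonneg I₀ u))
      (aux_le_Sq hq x hx1 u I₀) (by linarith)
  have h1 : 0 < ∫ u, I₀.toSet.indicator (fun _ => c) u := by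
    rw [integral_indicator_const c (aux_measurableSet_toSet I₀), measureReal_def, aux_volume_toSet,
      ENNReal.toReal_ofReal (aux_vol_pos I₀).le, smul_eq_mul]
    exact mul_pos (aux_vol_pos I₀) hcpos
  exact lt_of_lt_of_le h1 (integral_mono hgint hx2 hle)

end Main

open Classical in
/-- For nonzero `x ∈ f_{p,q}`, `F_x` is a norming functional: `F_x(x) = ‖x‖` and
`|F_x(y)| ≤ ‖y‖` for all `y ∈ f_{p,q}` (hence `‖F_x‖ = 1`); in particular
`|F_x(e_I)| = (|x_I|^{q−1}/‖x‖^{p−1}) |I|^{−q/p} ∫_I (S_q x)^{p−q}`. -/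
theorem stmt_14 {d : ℕ} {𝕜 : Type*} [RCLike 𝕜] (p q : ℝ) (hp : 1 < p) (hq : 1 < q)
    (x : DyadicRect d → 𝕜) (hx : x ≠ 0)
    (hx1 : ∀ u, Summable fun I => (‖x I‖ * DyadicRect.indp p I u) ^ q)
    (hx2 : MeasureTheory.Integrable fun u => Sq p q x u ^ p) :
    fpqF p q x x = ((fpqNorm p q x : ℝ) : 𝕜) ∧
      (∀ y : DyadicRect d → 𝕜,
        (∀ u, Summable fun I => (‖y I‖ * DyadicRect.indp p I u) ^ q) →
        (MeasureTheory.Integrable fun u => Sq p q y u ^ p) →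
        ‖fpqF p q x y‖ ≤ fpqNorm p q y) ∧
      ∀ I₀ : DyadicRect d,
        ‖fpqF p q x (fun I => if I = I₀ then 1 else 0)‖ =
          ‖x I₀‖ ^ (q - 1) / fpqNorm p q x ^ (p - 1) * I₀.vol ^ (-(q / p)) *
            ∫ u in I₀.toSet, Sq p q x u ^ (p - q) := by
  have hp0 : p ≠ 0 := by linarith
  have hq0 : q ≠ 0 := by linarith
  have hp1' : p - 1 ≠ 0 := by intro h; exact absurd (by linarith : p = 1) (by linarith)
  have hint_pos : 0 < ∫ u, Sq p q x u ^ p := aux_integral_Sq_pos hp hq x hx hx1 hx2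
  have hN : 0 < fpqNorm p q x := Real.rpow_pos_of_pos hint_pos _
  have hNp : fpqNorm p q x ^ p = ∫ u, Sq p q x u ^ p := by
    rw [fpqNorm, ← Real.rpow_mul hint_pos.le, one_div, inv_mul_cancel₀ hp0, Real.rpow_one]
  refine ⟨?_, ?_, ?_⟩
  · -- F_x(x) = ‖x‖
    rw [fpqF]
    have heq : (fun u => ((Sq p q x u ^ (p - q) : ℝ) : 𝕜) *
        ∑' I, ((‖x I‖ ^ (q - 2) * DyadicRect.indp p I u ^ q : ℝ) : 𝕜) * conj (x I) * x I)
        = fun u => ((Sq p q x u ^ p : ℝ) : 𝕜) :=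
      funext (aux_key_eq hp0 hq x hx1)
    rw [heq, integral_ofReal, ← RCLike.ofReal_mul]
    congr 1
    rw [← hNp, ← Real.rpow_add hN]
    norm_num
  · -- norming bound
    intro y hy1 hy2
    have hIy : 0 ≤ ∫ u, Sq p q y u ^ p :=
      MeasureTheory.integral_nonneg fun u => Real.rpow_nonneg (aux_Sq_nonneg y u) p
    have hMy : 0 ≤ fpqNorm p q y := Real.rpow_nonneg hIy _
    rw [fpqF, norm_mul, RCLike.norm_ofReal,
      abs_of_pos (Real.rpow_pos_of_pos hN (1 - p))]
    set g : (Fin d → ℝ) → 𝕜 := fun u => ((Sq p q x u ^ (p - q) : ℝ) : 𝕜) *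
        ∑' I, ((‖x I‖ ^ (q - 2) * DyadicRect.indp p I u ^ q : ℝ) : 𝕜) * conj (x I) * y I
      with hgdef
    set F : (Fin d → ℝ) → ENNReal := fun u => ENNReal.ofReal (Sq p q x u ^ (p - 1)) with hF
    set G : (Fin d → ℝ) → ENNReal := fun u => ENNReal.ofReal (Sq p q y u) with hG
    have hpconj : (p/(p-1)).HolderConjugate p := (Real.HolderConjugate.conjExponent hp).symm
    have hppos : 0 ≤ p/(p-1) := le_of_lt hpconj.pos
    have h2 : (∫⁻ u, ENNReal.ofReal ‖g u‖) ≤ ∫⁻ u, (F * G) u := by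
      refine MeasureTheory.lintegral_mono fun u => ?_
      refine (ENNReal.ofReal_le_ofReal (aux_key_bound hq x y hx1 hy1 u)).trans (le_of_eq ?_)
      rw [ENNReal.ofReal_mul (Real.rpow_nonneg (aux_Sq_nonneg x u) _)]
      rfl
    have hFmeas : AEMeasurable F :=
      (((aux_measurable_Sq x hx1).pow measurable_const).ennreal_ofReal).aemeasurable
    have hGmeas : AEMeasurable G :=
      ((aux_measurable_Sq y hy1).ennreal_ofReal).aemeasurable
    have h3 := ENNReal.lintegral_mul_le_Lp_mul_Lq MeasureTheory.volume hpconj hFmeas hGmeas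
    have h4 : (∫⁻ u, F u ^ (p/(p-1))) = ENNReal.ofReal (∫ u, Sq p q x u ^ p) := by
      have heq : ∀ u, F u ^ (p/(p-1)) = ENNReal.ofReal (Sq p q x u ^ p) := by
        intro u
        rw [hF, ENNReal.ofReal_rpow_of_nonneg (Real.rpow_nonneg (aux_Sq_nonneg x u) _) hppos,
          ← Real.rpow_mul (aux_Sq_nonneg x u), mul_comm (p-1), div_mul_cancel₀ p hp1']
      rw [MeasureTheory.lintegral_congr heq,
        ← MeasureTheory.ofReal_integral_eq_lintegral_ofReal hx2
          (Filter.Eventually.of_forall fun u => Real.rpow_nonneg (aux_Sq_nonneg x u) p)]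
    have h5 : (∫⁻ u, G u ^ p) = ENNReal.ofReal (∫ u, Sq p q y u ^ p) := by
      have heq : ∀ u, G u ^ p = ENNReal.ofReal (Sq p q y u ^ p) := by
        intro u
        rw [hG, ENNReal.ofReal_rpow_of_nonneg (aux_Sq_nonneg y u) (by linarith)]
      rw [MeasureTheory.lintegral_congr heq,
        ← MeasureTheory.ofReal_integral_eq_lintegral_ofReal hy2
          (Filter.Eventually.of_forall fun u => Real.rpow_nonneg (aux_Sq_nonneg y u) p)]
    have hchain : (∫⁻ u, ENNReal.ofReal ‖g u‖)
        ≤ ENNReal.ofReal ((∫ u, Sq p q x u ^ p) ^ (1/(p/(p-1)))) *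
          ENNReal.ofReal ((∫ u, Sq p q y u ^ p) ^ (1/p)) := by
      refine (h2.trans h3).trans (le_of_eq ?_)
      rw [h4, h5, ENNReal.ofReal_rpow_of_nonneg hint_pos.le (by positivity),
        ENNReal.ofReal_rpow_of_nonneg hIy (by positivity)]
    have hfin : ENNReal.ofReal ((∫ u, Sq p q x u ^ p) ^ (1/(p/(p-1)))) *
        ENNReal.ofReal ((∫ u, Sq p q y u ^ p) ^ (1/p)) ≠ ⊤ :=
      ENNReal.mul_ne_top ENNReal.ofReal_ne_top ENNReal.ofReal_ne_top
    have h6 : ‖∫ u, g u‖ ≤ (∫ u, Sq p q x u ^ p) ^ (1/(p/(p-1))) * fpqNorm p q y := by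
      refine (MeasureTheory.norm_integral_le_lintegral_norm g).trans ?_
      have := ENNReal.toReal_mono hfin hchain
      rwa [ENNReal.toReal_mul,
        ENNReal.toReal_ofReal (Real.rpow_nonneg hint_pos.le _),
        ENNReal.toReal_ofReal (Real.rpow_nonneg hIy _)] at this
    refine (mul_le_mul_of_nonneg_left h6 (Real.rpow_nonneg hN.le _)).trans (le_of_eq ?_)
    rw [← mul_assoc]
    have h7 : (∫ u, Sq p q x u ^ p) ^ (1/(p/(p-1))) = fpqNorm p q x ^ (p - 1) := by
      rw [one_div_div, ← hNp, ← Real.rpow_mul hN.le, mul_comm p, div_mul_cancel₀ _ hp0]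
    rw [h7, ← Real.rpow_add hN]
    norm_num
  · -- value at e_{I₀}
    intro I₀
    rw [fpqF]
    have hcol : (fun u => ((Sq p q x u ^ (p - q) : ℝ) : 𝕜) *
        ∑' I, ((‖x I‖ ^ (q - 2) * DyadicRect.indp p I u ^ q : ℝ) : 𝕜) * conj (x I) *
          (if I = I₀ then 1 else 0))
        = fun u => ((((‖x I₀‖ ^ (q - 2) * I₀.vol ^ (-(q/p))) *
            I₀.toSet.indicator (fun v => Sq p q x v ^ (p - q)) u : ℝ)) : 𝕜) * conj (x I₀) := by
      funext u
      rw [tsum_eq_single I₀ (fun I hI => by rw [if_neg hI, mul_zero]), if_pos rfl, mul_one]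
      have hind : DyadicRect.indp p I₀ u ^ q
          = I₀.vol ^ (-(q/p)) * I₀.toSet.indicator (fun _ => (1:ℝ)) u := by
        rw [DyadicRect.indp]
        by_cases hu : u ∈ I₀.toSet
        · rw [Set.indicator_of_mem hu, mul_one, mul_one,
            ← Real.rpow_mul (aux_vol_pos I₀).le]
          congr 1; ring
        · rw [Set.indicator_of_notMem hu, mul_zero, mul_zero,
            Real.zero_rpow hq0]
      rw [hind, ← mul_assoc, ← RCLike.ofReal_mul]
      congr 2
      by_cases hu : u ∈ I₀.toSet
      · rw [Set.indicator_of_mem hu, Set.indicator_of_mem hu]; ring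
      · rw [Set.indicator_of_notMem hu, Set.indicator_of_notMem hu]; ring
    rw [hcol, MeasureTheory.integral_mul_const, integral_ofReal,
      MeasureTheory.integral_const_mul,
      MeasureTheory.integral_indicator (aux_measurableSet_toSet I₀)]
    set T : ℝ := ∫ u in I₀.toSet, Sq p q x u ^ (p - q) with hT
    have hTnn : 0 ≤ T :=
      MeasureTheory.integral_nonneg fun u => Real.rpow_nonneg (aux_Sq_nonneg x u) _
    rw [norm_mul, norm_mul, RCLike.norm_ofReal, RCLike.norm_ofReal, RCLike.norm_conj,
      abs_of_pos (Real.rpow_pos_of_pos hN _),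
      abs_of_nonneg (mul_nonneg (mul_nonneg (Real.rpow_nonneg (norm_nonneg _) _)
        (Real.rpow_nonneg (aux_vol_pos I₀).le _)) hTnn)]
    have hxq : ‖x I₀‖ ^ (q - 2) * ‖x I₀‖ = ‖x I₀‖ ^ (q - 1) := by
      have := aux_rpow_mul_self (t := ‖x I₀‖) (a := q - 2) (norm_nonneg _)
        (by intro h; exact absurd (by linarith : q = 1) (by linarith))
      rw [this]; congr 1; ring
    have hNinv : fpqNorm p q x ^ (1 - p) = (fpqNorm p q x ^ (p - 1))⁻¹ := by
      rw [show (1 - p) = -(p - 1) by ring, Real.rpow_neg hN.le]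
    rw [hNinv, div_eq_mul_inv, ← hxq]
    ring
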